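/- Fix θ ∈ (0,1), let d_θ be the standard metric on Ω = {1,...,d}^ℕ, and let log J : Ω → ℝ be Lipschitz with respect to d_θ and normalized (∑_{a=1}^d J(a⌢x) = 1 for all x). Then there exist δ > 0, t ∈ ℕ with t ≥ 1, and α ∈ (0,1) such that, with the equivalent metric d(x,y) = min{1, δ⁻¹ d_θ(x,y)}, the t-th iterate of the dual Ruelle operator is an α-contraction in the 1-Wasserstein distance: for all Borel probability measures μ₁, μ₂ on Ω, W₁((ℒ*)ᵗ(μ₁), (ℒ*)ᵗ(μ₂)) ≤ α · W₁(μ₁, μ₂), where W₁(μ,ν) = inf over couplings Γ of μ and ν of ∫ d(x,y) dΓ(x,y). -/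

import Mathlib

/-!
The `t`-step dual operator sends `δ_x` to `∑_w J_t(w, x) δ_{wx}`, the sum over words `w` of
length `t`. For two points `x`, `y` couple these measures maximally: the common mass
`min (J_t(w, x)) (J_t(w, y))` sits on pairs `(wx, wy)`, at distance `θ^t d_θ(x, y)`, and only the
rest is paired arbitrarily. Bounded distortion (along a word the variations of `log J` add up to
at most `K d_θ(x, y)`, `K = M θ / (1 - θ)`) makes the common mass at least `exp (-K d_θ(x, y))`,
so the truncated cost `min 1 (δ⁻¹ d_θ)` drops by a uniform factor `α < 1` once `δ` is small and
`θ^t ≪ δ`. Integrating these couplings against a coupling of `μ₁` and `μ₂` gives a coupling of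
the images.
-/

open MeasureTheory Finset

/-- The metric `d_θ` on `Ω = {1,…,d}^ℕ`: `d_θ(x,y) = θ^N` where `N` is the first index
at which `x` and `y` disagree, and `d_θ(x,y) = 0` if `x = y`. -/
noncomputable def dTheta {d : ℕ} (θ : ℝ) (x y : ℕ → Fin d) : ℝ :=
  letI := Classical.dec (x = y)
  if h : x = y then 0 else θ ^ Nat.find (Function.ne_iff.mp h)

/-- Prepending a symbol: `a⌢x`. -/
def cons {d : ℕ} (a : Fin d) (x : ℕ → Fin d) : ℕ → Fin d :=
  fun n => match n with
  | 0 => a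
  | m + 1 => x m

/-- The dual `ℒ*` of the Ruelle operator of the potential `log J`, acting on Borel
measures on `Ω = {1,…,d}^ℕ`: it satisfies `∫ ψ d(ℒ*ν) = ∫ ℒψ dν` where
`(ℒψ)(x) = ∑_a J(a⌢x) ψ(a⌢x)`. -/
noncomputable def dualRuelle {d : ℕ} (J : (ℕ → Fin d) → ℝ)
    (ν : Measure (ℕ → Fin d)) : Measure (ℕ → Fin d) :=
  ν.bind (fun x => ∑ a : Fin d, ENNReal.ofReal (J (cons a x)) • Measure.dirac (cons a x))

/-- The optimal transport cost (for the cost `c`) between two measures on `Ω`: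
the infimum over couplings `Γ` of `∫ c dΓ`.  For `c` a metric `d` this is the
`1`-Wasserstein distance `W₁`. -/
noncomputable def Wcost {d : ℕ} (c : ((ℕ → Fin d) × (ℕ → Fin d)) → ℝ)
    (μ ν : Measure (ℕ → Fin d)) : ℝ :=
  sInf {r : ℝ | ∃ Γ : Measure ((ℕ → Fin d) × (ℕ → Fin d)),
    Γ.map Prod.fst = μ ∧ Γ.map Prod.snd = ν ∧ r = ∫ p, c p ∂Γ}

section dTheta

variable {d : ℕ} {θ : ℝ}

theorem dTheta_self (θ : ℝ) (x : ℕ → Fin d) : dTheta θ x x = 0 := by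
  simp [dTheta]

theorem dTheta_eq_pow {x y : ℕ → Fin d} {N : ℕ} (hN : x N ≠ y N) (hlt : ∀ i < N, x i = y i) :
    dTheta θ x y = θ ^ N := by
  have hxy : x ≠ y := fun h => hN (congrFun h N)
  rw [dTheta, dif_neg hxy]
  congr 1
  rw [Nat.find_eq_iff]
  exact ⟨hN, fun i hi => not_not.2 (hlt i hi)⟩

theorem dTheta_of_ne {x y : ℕ → Fin d} (h : x ≠ y) :
    dTheta θ x y = θ ^ PiNat.firstDiff x y :=
  dTheta_eq_pow (PiNat.apply_firstDiff_ne h) fun _ => PiNat.apply_eq_of_lt_firstDiff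

theorem dTheta_nonneg (hθ : 0 ≤ θ) (x y : ℕ → Fin d) : 0 ≤ dTheta θ x y := by
  by_cases h : x = y
  · rw [h, dTheta_self]
  · rw [dTheta_of_ne h]
    positivity

theorem dTheta_le_pow_of_eq (hθ0 : 0 ≤ θ) (hθ1 : θ ≤ 1) {x y : ℕ → Fin d} {n : ℕ}
    (h : ∀ i < n, x i = y i) : dTheta θ x y ≤ θ ^ n := by
  by_cases hxy : x = y
  · rw [hxy, dTheta_self]
    positivity
  · rw [dTheta_of_ne hxy]
    exact pow_le_pow_of_le_one hθ0 hθ1 <|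
      not_lt.1 fun hlt => PiNat.apply_firstDiff_ne hxy (h _ hlt)

theorem dTheta_le_one (hθ0 : 0 ≤ θ) (hθ1 : θ ≤ 1) (x y : ℕ → Fin d) : dTheta θ x y ≤ 1 :=
  (dTheta_le_pow_of_eq hθ0 hθ1 (n := 0) (by simp)).trans_eq (pow_zero θ)

theorem dTheta_cons (θ : ℝ) (a : Fin d) (x y : ℕ → Fin d) :
    dTheta θ (cons a x) (cons a y) = θ * dTheta θ x y := by
  by_cases hxy : x = y
  · rw [hxy, dTheta_self, dTheta_self, mul_zero]
  · rw [dTheta_of_ne hxy, ← pow_succ']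
    refine dTheta_eq_pow (N := PiNat.firstDiff x y + 1) (PiNat.apply_firstDiff_ne hxy)
      fun i hi => ?_
    cases i with
    | zero => rfl
    | succ i => exact PiNat.apply_eq_of_lt_firstDiff (x := x) (y := y) (by omega)

theorem measurable_dTheta :
    Measurable fun p : (ℕ → Fin d) × (ℕ → Fin d) => dTheta θ p.1 p.2 := by
  classical
  have hdiag : MeasurableSet {p : (ℕ → Fin d) × (ℕ → Fin d) | p.1 = p.2} :=
    measurableSet_eq_fun measurable_fst measurable_snd
  -- `measurable_find` needs a witness at every point, so the diagonal is added to the predicate.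
  have hex (p : (ℕ → Fin d) × (ℕ → Fin d)) : ∃ N, p.1 = p.2 ∨ p.1 N ≠ p.2 N := by
    by_cases h : p.1 = p.2
    · exact ⟨0, .inl h⟩
    · obtain ⟨N, hN⟩ := Function.ne_iff.1 h
      exact ⟨N, .inr hN⟩
  have hfind : Measurable fun p => Nat.find (hex p) :=
    measurable_find hex fun k => hdiag.union
      (measurableSet_eq_fun (measurable_pi_apply k |>.comp measurable_fst)
        (measurable_pi_apply k |>.comp measurable_snd)).compl
  have hdTheta : (fun p : (ℕ → Fin d) × (ℕ → Fin d) => dTheta θ p.1 p.2) =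
      fun p => if p.1 = p.2 then 0 else θ ^ Nat.find (hex p) := by
    funext p
    split_ifs with h
    · rw [h, dTheta_self]
    · refine dTheta_eq_pow (by simpa [h] using Nat.find_spec (hex p)) fun i hi => ?_
      simpa [h] using Nat.find_min (hex p) hi
  rw [hdTheta]
  exact Measurable.ite hdiag measurable_const (measurable_from_nat.comp hfind)

theorem continuous_of_abs_sub_le_mul_dTheta (hθ0 : 0 ≤ θ) (hθ1 : θ < 1) {M : ℝ}
    {F : (ℕ → Fin d) → ℝ} (hF : ∀ u v, |F u - F v| ≤ M * dTheta θ u v) : Continuous F := by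
  refine continuous_iff_continuousAt.2 fun x => Metric.tendsto_nhds.2 fun ε hε => ?_
  obtain ⟨n, hn⟩ := (((tendsto_pow_atTop_nhds_zero_of_lt_one hθ0 hθ1).const_mul |M|).eventually
    (gt_mem_nhds (show |M| * 0 < ε by simpa using hε))).exists
  filter_upwards [(PiNat.isOpen_cylinder _ x n).mem_nhds (PiNat.self_mem_cylinder x n)] with y hy
  calc dist (F y) (F x) = |F y - F x| := Real.dist_eq _ _
    _ ≤ M * dTheta θ y x := hF y x
    _ ≤ |M| * θ ^ n := mul_le_mul (le_abs_self M) (dTheta_le_pow_of_eq hθ0 hθ1.le hy)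
        (dTheta_nonneg hθ0 y x) (abs_nonneg M)
    _ < ε := hn

end dTheta

section Words

variable {d : ℕ}

/-- `prependWord t w x = w 0 w 1 … w (t-1) x`: the symbol `w 0` is prepended last. -/
def prependWord : (t : ℕ) → (Fin t → Fin d) → (ℕ → Fin d) → ℕ → Fin d
  | 0, _, x => x
  | t + 1, w, x => cons (w 0) (prependWord t (Fin.tail w) x)

theorem prependWord_fin_cons (t : ℕ) (a : Fin d) (w : Fin t → Fin d) (x : ℕ → Fin d) :
    prependWord (t + 1) (Fin.cons a w) x = cons a (prependWord t w x) := by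
  simp [prependWord]

theorem dTheta_prependWord (θ : ℝ) (t : ℕ) (w : Fin t → Fin d) (x y : ℕ → Fin d) :
    dTheta θ (prependWord t w x) (prependWord t w y) = θ ^ t * dTheta θ x y := by
  induction t with
  | zero => simp [prependWord]
  | succ t ih =>
    rw [prependWord, prependWord, dTheta_cons, ih, pow_succ']
    ring

theorem measurable_cons (a : Fin d) : Measurable (cons a) :=
  measurable_pi_lambda _ fun n => by
    cases n with
    | zero => exact measurable_const
    | succ m => exact measurable_pi_apply m

theorem measurable_prependWord (t : ℕ) (w : Fin t → Fin d) : Measurable (prependWord t w) := by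
  induction t with
  | zero => exact measurable_id
  | succ t ih => exact (measurable_cons _).comp (ih _)

end Words

section WordWeight

variable {d : ℕ} {J : (ℕ → Fin d) → ℝ}

/-- The mass `J_t(w, x)` that `(ℒ*)ᵗ δ_x` puts on `prependWord t w x`. -/
def wordWeight (J : (ℕ → Fin d) → ℝ) : (t : ℕ) → (Fin t → Fin d) → (ℕ → Fin d) → ℝ
  | 0, _, _ => 1
  | t + 1, w, x => J (prependWord (t + 1) w x) * wordWeight J t (Fin.tail w) x

theorem wordWeight_fin_cons (t : ℕ) (a : Fin d) (w : Fin t → Fin d) (x : ℕ → Fin d) :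
    wordWeight J (t + 1) (Fin.cons a w) x =
      J (cons a (prependWord t w x)) * wordWeight J t w x := by
  rw [wordWeight, prependWord_fin_cons, Fin.tail_cons]

theorem wordWeight_pos (hJ : ∀ x, 0 < J x) (t : ℕ) (w : Fin t → Fin d) (x : ℕ → Fin d) :
    0 < wordWeight J t w x := by
  induction t with
  | zero => exact one_pos
  | succ t ih => exact mul_pos (hJ _) (ih _)

theorem wordWeight_nonneg (hJ : ∀ x, 0 ≤ J x) (t : ℕ) (w : Fin t → Fin d) (x : ℕ → Fin d) :
    0 ≤ wordWeight J t w x := by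
  induction t with
  | zero => exact zero_le_one
  | succ t ih => exact mul_nonneg (hJ _) (ih _)

theorem measurable_wordWeight (hJ : Measurable J) (t : ℕ) (w : Fin t → Fin d) :
    Measurable (wordWeight J t w) := by
  induction t with
  | zero => exact measurable_const
  | succ t ih => exact (hJ.comp (measurable_prependWord _ _)).mul (ih _)

theorem sum_fun_fin_succ {α M : Type*} [Fintype α] [AddCommMonoid M] {t : ℕ}
    (F : (Fin (t + 1) → α) → M) : ∑ v, F v = ∑ a, ∑ w : Fin t → α, F (Fin.cons a w) := by
  rw [← Fintype.sum_prod_type']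
  exact (Fintype.sum_equiv (Fin.consEquiv fun _ => α) _ _ fun _ => rfl).symm

theorem sum_wordWeight (hJnorm : ∀ x, ∑ a : Fin d, J (cons a x) = 1) (t : ℕ) (x : ℕ → Fin d) :
    ∑ w, wordWeight J t w x = 1 := by
  induction t with
  | zero => simp [wordWeight]
  | succ t ih =>
    simp only [sum_fun_fin_succ, wordWeight_fin_cons]
    rw [Finset.sum_comm, ← ih]
    exact Finset.sum_congr rfl fun w _ => by rw [← Finset.sum_mul, hJnorm, one_mul]

theorem abs_log_wordWeight_sub_le {θ M : ℝ} (hJ : ∀ x, 0 < J x)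
    (hJlip : ∀ u v, |Real.log (J u) - Real.log (J v)| ≤ M * dTheta θ u v)
    (t : ℕ) (w : Fin t → Fin d) (x y : ℕ → Fin d) :
    |Real.log (wordWeight J t w x) - Real.log (wordWeight J t w y)| ≤
      M * (∑ i ∈ Finset.Ico 1 (t + 1), θ ^ i) * dTheta θ x y := by
  induction t with
  | zero => simp [wordWeight]
  | succ t ih =>
    rw [wordWeight, wordWeight, Real.log_mul (hJ _).ne' (wordWeight_pos hJ _ _ _).ne',
      Real.log_mul (hJ _).ne' (wordWeight_pos hJ _ _ _).ne', add_sub_add_comm]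
    refine (abs_add_le _ _).trans ((add_le_add (hJlip _ _) (ih _)).trans_eq ?_)
    rw [dTheta_prependWord, Finset.sum_Ico_succ_top (show 1 ≤ t + 1 by omega)]
    ring

theorem exp_neg_mul_wordWeight_le {θ M : ℝ} (hθ0 : 0 ≤ θ) (hθ1 : θ < 1) (hM : 0 ≤ M)
    (hJ : ∀ x, 0 < J x) (hJlip : ∀ u v, |Real.log (J u) - Real.log (J v)| ≤ M * dTheta θ u v)
    (t : ℕ) (w : Fin t → Fin d) (x y : ℕ → Fin d) :
    Real.exp (-(M * (θ / (1 - θ)) * dTheta θ x y)) * wordWeight J t w y ≤ wordWeight J t w x := by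
  have hgeom : ∑ i ∈ Finset.Ico 1 (t + 1), θ ^ i ≤ θ / (1 - θ) := by
    simpa using geom_sum_Ico_le_of_lt_one (m := 1) (n := t + 1) hθ0 hθ1
  have hlog : Real.log (wordWeight J t w y) - Real.log (wordWeight J t w x) ≤
      M * (θ / (1 - θ)) * dTheta θ x y := by
    refine (le_abs_self _).trans ?_
    rw [abs_sub_comm]
    refine (abs_log_wordWeight_sub_le hJ hJlip t w x y).trans ?_
    gcongr
    exact dTheta_nonneg hθ0 x y
  calc Real.exp (-(M * (θ / (1 - θ)) * dTheta θ x y)) * wordWeight J t w y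
      = Real.exp (Real.log (wordWeight J t w y) - M * (θ / (1 - θ)) * dTheta θ x y) := by
        rw [Real.exp_sub, Real.exp_neg, Real.exp_log (wordWeight_pos hJ t w y)]
        ring
    _ ≤ Real.exp (Real.log (wordWeight J t w x)) := Real.exp_le_exp.2 (by linarith)
    _ = wordWeight J t w x := Real.exp_log (wordWeight_pos hJ t w x)

end WordWeight

section WeightedDirac

variable {ι X Y : Type*} [Fintype ι] [MeasurableSpace X] [MeasurableSpace Y]

noncomputable def weightedDirac (p : ι → ℝ) (f : ι → X) : Measure X :=
  ∑ i, ENNReal.ofReal (p i) • Measure.dirac (f i)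

theorem weightedDirac_apply (p : ι → ℝ) (f : ι → X) {s : Set X} (hs : MeasurableSet s) :
    weightedDirac p f s = ∑ i, ENNReal.ofReal (p i) * s.indicator 1 (f i) := by
  simp [weightedDirac, Measure.dirac_apply' _ hs]

theorem measurable_weightedDirac {Z : Type*} [MeasurableSpace Z] {p : Z → ι → ℝ}
    {f : Z → ι → X} (hp : ∀ i, Measurable fun z => p z i) (hf : ∀ i, Measurable fun z => f z i) :
    Measurable fun z => weightedDirac (p z) (f z) := by
  refine Measure.measurable_of_measurable_coe _ fun s hs => ?_
  simp only [weightedDirac_apply _ _ hs]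
  exact Finset.measurable_sum _ fun i _ =>
    (ENNReal.measurable_ofReal.comp (hp i)).mul ((measurable_one.indicator hs).comp (hf i))

theorem lintegral_weightedDirac [MeasurableSingletonClass X] {p : ι → ℝ} (hp : 0 ≤ p)
    (f : ι → X) {g : X → ℝ} (hg : 0 ≤ g) :
    ∫⁻ z, ENNReal.ofReal (g z) ∂weightedDirac p f = ENNReal.ofReal (∑ i, p i * g (f i)) := by
  rw [ENNReal.ofReal_sum_of_nonneg fun i _ => mul_nonneg (hp i) (hg _)]
  simp [weightedDirac, lintegral_finsetSum_measure, ENNReal.ofReal_mul (hp _)]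

theorem bind_weightedDirac {κ : X → Measure Y} (hκ : Measurable κ) (p : ι → ℝ) (f : ι → X) :
    (weightedDirac p f).bind κ = ∑ i, ENNReal.ofReal (p i) • κ (f i) := by
  rw [weightedDirac, ← Measure.sum_fintype, Measure.bind_sum _ _ hκ.aemeasurable,
    Measure.sum_fintype]
  simp only [Measure.bind_smul, Measure.dirac_bind hκ]

theorem map_weightedDirac {g : X → Y} (hg : Measurable g) (p : ι → ℝ) (f : ι → X) :
    (weightedDirac p f).map g = weightedDirac p (g ∘ f) := by
  simp only [weightedDirac, Measure.map_finset_sum hg.aemeasurable, Measure.map_smul,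
    Measure.map_dirac' hg, Function.comp_apply]

theorem map_fst_weightedDirac_prod {κ : Type*} [Fintype κ] {π : ι × κ → ℝ} (hπ : 0 ≤ π)
    (f : ι → X) (g : κ → Y) :
    (weightedDirac π fun ij => (f ij.1, g ij.2)).map Prod.fst =
      weightedDirac (fun i => ∑ j, π (i, j)) f := by
  rw [map_weightedDirac measurable_fst]
  simp only [weightedDirac, Function.comp_apply,
    Fintype.sum_prod_type, ENNReal.ofReal_sum_of_nonneg fun _ _ => hπ _, Finset.sum_smul]

theorem map_snd_weightedDirac_prod {κ : Type*} [Fintype κ] {π : ι × κ → ℝ} (hπ : 0 ≤ π)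
    (f : ι → X) (g : κ → Y) :
    (weightedDirac π fun ij => (f ij.1, g ij.2)).map Prod.snd =
      weightedDirac (fun j => ∑ i, π (i, j)) g := by
  rw [map_weightedDirac measurable_snd]
  simp only [weightedDirac, Function.comp_apply,
    Fintype.sum_prod_type_right, ENNReal.ofReal_sum_of_nonneg fun _ _ => hπ _, Finset.sum_smul]

end WeightedDirac

section MaxCoupling

variable {ι : Type*} {p q : ι → ℝ}

def excess (p q : ι → ℝ) (i : ι) : ℝ := p i - min (p i) (q i)

theorem excess_nonneg (p q : ι → ℝ) (i : ι) : 0 ≤ excess p q i :=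
  sub_nonneg.2 (min_le_left _ _)

theorem min_add_excess (p q : ι → ℝ) (i : ι) : min (p i) (q i) + excess p q i = p i :=
  add_sub_cancel _ _

variable [Fintype ι]

theorem sum_excess_comm (hpq : ∑ i, p i = ∑ i, q i) :
    ∑ i, excess q p i = ∑ i, excess p q i := by
  simp only [excess, Finset.sum_sub_distrib, hpq, min_comm]

theorem excess_eq_zero_of_sum_eq_zero (h : ∑ k, excess p q k = 0) (i : ι) : excess p q i = 0 :=
  (Finset.sum_eq_zero_iff_of_nonneg fun k _ => excess_nonneg p q k).1 h i (Finset.mem_univ i)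

variable [DecidableEq ι]

/-- The maximal coupling of two weight vectors of equal mass: the common part `min (p i) (q i)`
stays on the diagonal, and the excesses of `p` and of `q` are coupled independently (when there
is no excess, division by zero makes that term vanish). -/
noncomputable def maxCouplingWeight (p q : ι → ℝ) (ij : ι × ι) : ℝ :=
  (if ij.1 = ij.2 then min (p ij.1) (q ij.1) else 0) +
    excess p q ij.1 * excess q p ij.2 / ∑ k, excess p q k

theorem maxCouplingWeight_nonneg (hp : 0 ≤ p) (hq : 0 ≤ q) : 0 ≤ maxCouplingWeight p q :=
  fun ij => add_nonneg (by split_ifs; exacts [le_min (hp _) (hq _), le_rfl])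
    (div_nonneg (mul_nonneg (excess_nonneg _ _ _) (excess_nonneg _ _ _))
      (Finset.sum_nonneg fun k _ => excess_nonneg _ _ k))

theorem sum_maxCouplingWeight_right (hpq : ∑ i, p i = ∑ i, q i) (i : ι) :
    ∑ j, maxCouplingWeight p q (i, j) = p i := by
  simp only [maxCouplingWeight, Finset.sum_add_distrib, Finset.sum_ite_eq, Finset.mem_univ,
    if_true, ← Finset.sum_div, ← Finset.mul_sum, sum_excess_comm hpq]
  rw [mul_div_cancel_of_imp fun h => excess_eq_zero_of_sum_eq_zero h i, min_add_excess]

theorem sum_maxCouplingWeight_left (hpq : ∑ i, p i = ∑ i, q i) (j : ι) :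
    ∑ i, maxCouplingWeight p q (i, j) = q j := by
  simp only [maxCouplingWeight, Finset.sum_add_distrib, Finset.sum_ite_eq', Finset.mem_univ,
    if_true, ← Finset.sum_div, ← Finset.sum_mul]
  rw [← sum_excess_comm hpq, mul_comm,
    mul_div_cancel_of_imp fun h => excess_eq_zero_of_sum_eq_zero h j, min_comm, min_add_excess]

theorem sum_maxCouplingWeight_mul_le (hpq : ∑ i, p i = ∑ i, q i) {c : ι × ι → ℝ}
    (hc : ∀ ij, c ij ≤ 1) :
    ∑ ij, maxCouplingWeight p q ij * c ij ≤
      ∑ i, min (p i) (q i) * c (i, i) + ∑ i, excess p q i := by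
  have hoff : ∑ ij : ι × ι, excess p q ij.1 * excess q p ij.2 / ∑ k, excess p q k =
      ∑ i, excess p q i := by
    rw [← Finset.sum_div, Fintype.sum_prod_type]
    simp only [← Finset.mul_sum, ← Finset.sum_mul, sum_excess_comm hpq]
    exact mul_self_div_self _
  calc ∑ ij, maxCouplingWeight p q ij * c ij
      ≤ ∑ ij : ι × ι, ((if ij.1 = ij.2 then min (p ij.1) (q ij.1) * c ij else 0) +
          excess p q ij.1 * excess q p ij.2 / ∑ k, excess p q k) := by
        refine Finset.sum_le_sum fun ij _ => ?_
        rw [maxCouplingWeight, add_mul, ite_mul, zero_mul]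
        gcongr
        refine mul_le_of_le_one_right (div_nonneg ?_ ?_) (hc ij)
        · exact mul_nonneg (excess_nonneg _ _ _) (excess_nonneg _ _ _)
        · exact Finset.sum_nonneg fun k _ => excess_nonneg _ _ k
    _ = ∑ i, min (p i) (q i) * c (i, i) + ∑ i, excess p q i := by
        rw [Finset.sum_add_distrib, hoff, Fintype.sum_prod_type]
        simp only [Finset.sum_ite_eq, Finset.mem_univ, if_true]

end MaxCoupling

section RuelleKernel

variable {d : ℕ} {J : (ℕ → Fin d) → ℝ}

noncomputable def wordKernel (J : (ℕ → Fin d) → ℝ) (t : ℕ) (x : ℕ → Fin d) :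
    Measure (ℕ → Fin d) :=
  weightedDirac (fun w => wordWeight J t w x) fun w => prependWord t w x

theorem measurable_wordKernel (hJ : Measurable J) (t : ℕ) : Measurable (wordKernel J t) :=
  measurable_weightedDirac (measurable_wordWeight hJ t) fun w => measurable_prependWord t w

theorem wordKernel_zero (J : (ℕ → Fin d) → ℝ) (x : ℕ → Fin d) :
    wordKernel J 0 x = Measure.dirac x := by
  simp [wordKernel, weightedDirac, wordWeight, prependWord]

theorem dualRuelle_eq_bind (J : (ℕ → Fin d) → ℝ) (ν : Measure (ℕ → Fin d)) :
    dualRuelle J ν = ν.bind fun x => weightedDirac (fun a => J (cons a x)) fun a => cons a x :=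
  rfl

theorem measurable_weightedDirac_cons (hJ : Measurable J) :
    Measurable fun x : ℕ → Fin d => weightedDirac (fun a => J (cons a x)) fun a => cons a x :=
  measurable_weightedDirac (fun a => hJ.comp (measurable_cons a)) measurable_cons

theorem bind_wordKernel_dualRuelle (hJ : Measurable J) (hJ0 : ∀ x, 0 ≤ J x) (t : ℕ)
    (x : ℕ → Fin d) :
    (wordKernel J t x).bind
        (fun z => weightedDirac (fun a => J (cons a z)) fun a => cons a z) =
      wordKernel J (t + 1) x := by
  rw [wordKernel, bind_weightedDirac (measurable_weightedDirac_cons hJ)]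
  simp only [wordKernel, weightedDirac, sum_fun_fin_succ (M := Measure _), wordWeight_fin_cons,
    prependWord_fin_cons, ENNReal.ofReal_mul (hJ0 _), Finset.smul_sum, smul_smul]
  rw [Finset.sum_comm]
  simp only [mul_comm]

theorem iterate_dualRuelle_eq_bind (hJ : Measurable J) (hJ0 : ∀ x, 0 ≤ J x) (t : ℕ)
    (μ : Measure (ℕ → Fin d)) : (dualRuelle J)^[t] μ = μ.bind (wordKernel J t) := by
  induction t with
  | zero => simp [funext (wordKernel_zero J), Measure.bind_dirac]
  | succ t ih =>
    rw [Function.iterate_succ_apply', ih, dualRuelle_eq_bind, Measure.bind_bind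
      (measurable_wordKernel hJ t).aemeasurable (measurable_weightedDirac_cons hJ).aemeasurable]
    exact congrArg _ (funext (bind_wordKernel_dualRuelle hJ hJ0 t))

noncomputable def wordCoupling (J : (ℕ → Fin d) → ℝ) (t : ℕ) (p : (ℕ → Fin d) × (ℕ → Fin d)) :
    Measure ((ℕ → Fin d) × (ℕ → Fin d)) :=
  weightedDirac (maxCouplingWeight (fun w => wordWeight J t w p.1) fun w => wordWeight J t w p.2)
    fun ww => (prependWord t ww.1 p.1, prependWord t ww.2 p.2)

theorem measurable_wordCoupling (hJ : Measurable J) (t : ℕ) : Measurable (wordCoupling J t) := by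
  refine measurable_weightedDirac (fun ww => ?_) fun ww =>
    ((measurable_prependWord t ww.1).comp measurable_fst).prodMk
      ((measurable_prependWord t ww.2).comp measurable_snd)
  have := measurable_wordWeight hJ t
  simp only [maxCouplingWeight, excess]
  split_ifs <;> fun_prop

theorem map_fst_wordCoupling (hJ0 : ∀ x, 0 ≤ J x) (hJnorm : ∀ x, ∑ a : Fin d, J (cons a x) = 1)
    (t : ℕ) (p : (ℕ → Fin d) × (ℕ → Fin d)) :
    (wordCoupling J t p).map Prod.fst = wordKernel J t p.1 := by
  rw [wordCoupling, map_fst_weightedDirac_prod (maxCouplingWeight_nonneg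
    (fun w => wordWeight_nonneg hJ0 t w p.1) fun w => wordWeight_nonneg hJ0 t w p.2)
    (fun w => prependWord t w p.1) fun w => prependWord t w p.2]
  simp only [sum_maxCouplingWeight_right
    ((sum_wordWeight hJnorm t p.1).trans (sum_wordWeight hJnorm t p.2).symm), wordKernel]

theorem map_snd_wordCoupling (hJ0 : ∀ x, 0 ≤ J x) (hJnorm : ∀ x, ∑ a : Fin d, J (cons a x) = 1)
    (t : ℕ) (p : (ℕ → Fin d) × (ℕ → Fin d)) :
    (wordCoupling J t p).map Prod.snd = wordKernel J t p.2 := by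
  rw [wordCoupling, map_snd_weightedDirac_prod (maxCouplingWeight_nonneg
    (fun w => wordWeight_nonneg hJ0 t w p.1) fun w => wordWeight_nonneg hJ0 t w p.2)
    (fun w => prependWord t w p.1) fun w => prependWord t w p.2]
  simp only [sum_maxCouplingWeight_left
    ((sum_wordWeight hJnorm t p.1).trans (sum_wordWeight hJnorm t p.2).symm), wordKernel]

end RuelleKernel

section CouplingCost

variable {d : ℕ} {J : (ℕ → Fin d) → ℝ} {θ M : ℝ}

theorem exp_neg_mul_le_sum_min_wordWeight (hθ0 : 0 ≤ θ) (hθ1 : θ < 1) (hM : 0 ≤ M)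
    (hJ : ∀ x, 0 < J x) (hJlip : ∀ u v, |Real.log (J u) - Real.log (J v)| ≤ M * dTheta θ u v)
    (hJnorm : ∀ x, ∑ a : Fin d, J (cons a x) = 1) (t : ℕ) (x y : ℕ → Fin d) :
    Real.exp (-(M * (θ / (1 - θ)) * dTheta θ x y)) ≤
      ∑ w, min (wordWeight J t w x) (wordWeight J t w y) := by
  have hexp : Real.exp (-(M * (θ / (1 - θ)) * dTheta θ x y)) ≤ 1 := by
    have : 0 ≤ θ / (1 - θ) := div_nonneg hθ0 (by linarith)
    have := dTheta_nonneg hθ0 x y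
    exact Real.exp_le_one_iff.2 (by simp only [neg_nonpos]; positivity)
  calc Real.exp (-(M * (θ / (1 - θ)) * dTheta θ x y))
      = ∑ w, Real.exp (-(M * (θ / (1 - θ)) * dTheta θ x y)) * wordWeight J t w y := by
        rw [← Finset.mul_sum, sum_wordWeight hJnorm, mul_one]
    _ ≤ ∑ w, min (wordWeight J t w x) (wordWeight J t w y) :=
        Finset.sum_le_sum fun w _ => le_min (exp_neg_mul_wordWeight_le hθ0 hθ1 hM hJ hJlip t w x y)
          (mul_le_of_le_one_left (wordWeight_pos hJ t w y).le hexp)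

theorem lintegral_wordCoupling_le (hθ0 : 0 ≤ θ) (hθ1 : θ < 1) (hM : 0 ≤ M)
    (hJ : ∀ x, 0 < J x) (hJlip : ∀ u v, |Real.log (J u) - Real.log (J v)| ≤ M * dTheta θ u v)
    (hJnorm : ∀ x, ∑ a : Fin d, J (cons a x) = 1) {δ : ℝ} (hδ : 0 ≤ δ) (t : ℕ)
    (p : (ℕ → Fin d) × (ℕ → Fin d)) :
    ∫⁻ q, ENNReal.ofReal (min 1 (δ⁻¹ * dTheta θ q.1 q.2)) ∂wordCoupling J t p ≤
      ENNReal.ofReal (min 1 (δ⁻¹ * (θ ^ t * dTheta θ p.1 p.2)) +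
        (1 - Real.exp (-(M * (θ / (1 - θ)) * dTheta θ p.1 p.2)))) := by
  have hcost0 : 0 ≤ fun q : (ℕ → Fin d) × (ℕ → Fin d) => min 1 (δ⁻¹ * dTheta θ q.1 q.2) :=
    fun q => le_min zero_le_one (mul_nonneg (inv_nonneg.2 hδ) (dTheta_nonneg hθ0 _ _))
  have hmass : ∑ w, wordWeight J t w p.1 = ∑ w, wordWeight J t w p.2 := by
    rw [sum_wordWeight hJnorm, sum_wordWeight hJnorm]
  have hoverlap := exp_neg_mul_le_sum_min_wordWeight hθ0 hθ1 hM hJ hJlip hJnorm t p.1 p.2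
  have hoverlap_le : ∑ w, min (wordWeight J t w p.1) (wordWeight J t w p.2) ≤ 1 :=
    (Finset.sum_le_sum fun w _ => min_le_left _ _).trans_eq (sum_wordWeight hJnorm t p.1)
  have hB0 : 0 ≤ min 1 (δ⁻¹ * (θ ^ t * dTheta θ p.1 p.2)) := by
    have := dTheta_nonneg hθ0 p.1 p.2
    have := inv_nonneg.2 hδ
    exact le_min zero_le_one (by positivity)
  rw [wordCoupling, lintegral_weightedDirac (maxCouplingWeight_nonneg
    (fun w => (wordWeight_pos hJ t w p.1).le) fun w => (wordWeight_pos hJ t w p.2).le) _ hcost0]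
  refine ENNReal.ofReal_le_ofReal ?_
  refine (sum_maxCouplingWeight_mul_le hmass fun _ => min_le_left _ _).trans ?_
  simp only [dTheta_prependWord, ← Finset.sum_mul, excess, Finset.sum_sub_distrib,
    sum_wordWeight hJnorm]
  linarith [mul_le_of_le_one_left hB0 hoverlap_le]

end CouplingCost

section Transport

theorem map_bind_eq_bind_map {α β γ δ : Type*} [MeasurableSpace α] [MeasurableSpace β]
    [MeasurableSpace γ] [MeasurableSpace δ] {m : Measure α} {C : α → Measure β}
    {κ : γ → Measure δ} {f : α → γ} {g : β → δ} (hC : Measurable C) (hκ : Measurable κ)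
    (hf : Measurable f) (hg : Measurable g) (h : ∀ a, (C a).map g = κ (f a)) :
    (m.bind C).map g = (m.map f).bind κ := by
  ext s hs
  rw [Measure.map_apply hg hs, Measure.bind_apply (hg hs) hC.aemeasurable,
    Measure.bind_apply hs hκ.aemeasurable,
    lintegral_map (f := fun c => κ c s) ((Measure.measurable_coe hs).comp hκ) hf]
  exact lintegral_congr fun a => by rw [← h a, Measure.map_apply hg hs]

theorem integral_bind_le {α β : Type*} [MeasurableSpace α] [MeasurableSpace β] {m : Measure α}
    {C : α → Measure β} (hC : Measurable C) {g : β → ℝ} (hg : Measurable g) (hg0 : 0 ≤ g)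
    {f : α → ℝ} (hf : Integrable f m) (hf0 : 0 ≤ f)
    (h : ∀ a, ∫⁻ b, ENNReal.ofReal (g b) ∂C a ≤ ENNReal.ofReal (f a)) :
    ∫ b, g b ∂m.bind C ≤ ∫ a, f a ∂m := by
  rw [integral_eq_lintegral_of_nonneg_ae (ae_of_all _ hg0) hg.aestronglyMeasurable,
    integral_eq_lintegral_of_nonneg_ae (ae_of_all _ hf0) hf.aestronglyMeasurable,
    Measure.lintegral_bind hC.aemeasurable hg.ennreal_ofReal.aemeasurable]
  exact ENNReal.toReal_mono hf.lintegral_lt_top.ne (lintegral_mono h)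

variable {d : ℕ} {c : (ℕ → Fin d) × (ℕ → Fin d) → ℝ} {μ ν : Measure (ℕ → Fin d)}

theorem Wcost_le_integral (hc0 : 0 ≤ c) {Γ : Measure ((ℕ → Fin d) × (ℕ → Fin d))}
    (h₁ : Γ.map Prod.fst = μ) (h₂ : Γ.map Prod.snd = ν) : Wcost c μ ν ≤ ∫ p, c p ∂Γ :=
  csInf_le ⟨0, by rintro r ⟨Γ', -, -, rfl⟩; exact integral_nonneg hc0⟩ ⟨Γ, h₁, h₂, rfl⟩

theorem le_Wcost [IsProbabilityMeasure μ] [IsProbabilityMeasure ν] {r : ℝ}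
    (h : ∀ Γ : Measure ((ℕ → Fin d) × (ℕ → Fin d)),
      Γ.map Prod.fst = μ → Γ.map Prod.snd = ν → r ≤ ∫ p, c p ∂Γ) :
    r ≤ Wcost c μ ν :=
  le_csInf ⟨_, μ.prod ν, by simp [Measure.map_fst_prod], by simp [Measure.map_snd_prod], rfl⟩
    (by rintro _ ⟨Γ, h₁, h₂, rfl⟩; exact h Γ h₁ h₂)

theorem Wcost_bind_le (hc : Measurable c) (hc0 : 0 ≤ c) (hc1 : c ≤ 1) {α : ℝ} (hα : 0 < α)
    {κ : (ℕ → Fin d) → Measure (ℕ → Fin d)} (hκ : Measurable κ)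
    {C : (ℕ → Fin d) × (ℕ → Fin d) → Measure ((ℕ → Fin d) × (ℕ → Fin d))} (hC : Measurable C)
    (hfst : ∀ p, (C p).map Prod.fst = κ p.1) (hsnd : ∀ p, (C p).map Prod.snd = κ p.2)
    (hcost : ∀ p, ∫⁻ q, ENNReal.ofReal (c q) ∂C p ≤ ENNReal.ofReal (α * c p))
    [IsProbabilityMeasure μ] [IsProbabilityMeasure ν] :
    Wcost c (μ.bind κ) (ν.bind κ) ≤ α * Wcost c μ ν := by
  rw [← div_le_iff₀' hα]
  refine le_Wcost fun Γ h₁ h₂ => ?_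
  have : IsProbabilityMeasure (Γ.map Prod.fst) := h₁ ▸ inferInstance
  have : IsProbabilityMeasure Γ := Measure.isProbabilityMeasure_of_map Prod.fst
  have hcΓ : Integrable (fun p => α * c p) Γ :=
    (Integrable.of_bound hc.aestronglyMeasurable 1 (ae_of_all _ fun p => by
      simpa [abs_of_nonneg (hc0 p)] using hc1 p)).const_mul α
  rw [div_le_iff₀' hα, ← integral_const_mul]
  calc Wcost c (μ.bind κ) (ν.bind κ) ≤ ∫ q, c q ∂Γ.bind C :=
        Wcost_le_integral hc0
          (by rw [map_bind_eq_bind_map hC hκ measurable_fst measurable_fst hfst, h₁])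
          (by rw [map_bind_eq_bind_map hC hκ measurable_snd measurable_snd hsnd, h₂])
    _ ≤ ∫ p, α * c p ∂Γ :=
        integral_bind_le hC hc hc0 hcΓ (fun p => mul_nonneg hα.le (hc0 p)) hcost

end Transport

theorem exists_contraction_constants {θ K : ℝ} (hθ0 : 0 ≤ θ) (hθ1 : θ < 1) (hK : 0 ≤ K) :
    ∃ (δ : ℝ) (t : ℕ) (α : ℝ), 0 < δ ∧ 1 ≤ t ∧ 0 < α ∧ α < 1 ∧
      ∀ D, 0 ≤ D → D ≤ 1 →
        min 1 (δ⁻¹ * (θ ^ t * D)) + (1 - Real.exp (-(K * D))) ≤ α * min 1 (δ⁻¹ * D) := by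
  set ε := Real.exp (-K)
  have hε0 : 0 < ε := Real.exp_pos _
  have hε1 : ε ≤ 1 := Real.exp_le_one_iff.2 (neg_nonpos.2 hK)
  set δ := ε / (4 * (K + 1))
  have hδ : 0 < δ := by positivity
  have hδK : δ * K ≤ ε / 4 := by
    rw [div_mul_eq_mul_div, div_le_div_iff₀ (by positivity) (by norm_num)]
    nlinarith
  have hδ1 : δ ≤ 1 := by
    rw [div_le_one (by positivity)]
    linarith
  obtain ⟨n, hn⟩ := exists_pow_lt_of_lt_one (show 0 < δ * ε / 4 by positivity) hθ1
  have hθt : θ ^ (n + 1) ≤ δ * ε / 4 :=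
    (pow_le_pow_of_le_one hθ0 hθ1.le (Nat.le_succ n)).trans hn.le
  refine ⟨δ, n + 1, 1 - ε / 2, hδ, Nat.le_add_left 1 n, by linarith, by linarith,
    fun D hD0 hD1 => ?_⟩
  -- Far pairs lose at least the overlap `ε = exp (-K)`; near pairs are contracted by
  -- `θ ^ t + δ K ≤ ε / 2`.
  by_cases hfar : 1 ≤ δ⁻¹ * D
  · have hexp : Real.exp (-K) ≤ Real.exp (-(K * D)) := Real.exp_le_exp.2 (by nlinarith)
    have hshift : δ⁻¹ * (θ ^ (n + 1) * D) ≤ ε / 4 := by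
      rw [inv_mul_le_iff₀ hδ]
      nlinarith [pow_nonneg hθ0 (n + 1)]
    rw [min_eq_left hfar]
    linarith [min_le_right 1 (δ⁻¹ * (θ ^ (n + 1) * D))]
  · rw [not_le] at hfar
    have hexp : 1 - Real.exp (-(K * D)) ≤ K * D := by
      linarith [Real.add_one_le_exp (-(K * D))]
    rw [min_eq_right hfar.le]
    have hsmall : θ ^ (n + 1) + δ * K ≤ 1 - ε / 2 := by nlinarith
    have hsplit : δ⁻¹ * (θ ^ (n + 1) * D) + K * D = (θ ^ (n + 1) + δ * K) * (δ⁻¹ * D) := by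
      field_simp
    have hscaled := mul_le_mul_of_nonneg_right hsmall (mul_nonneg (inv_nonneg.2 hδ.le) hD0)
    linarith [min_le_right 1 (δ⁻¹ * (θ ^ (n + 1) * D))]

/-- for a normalized `d_θ`-Lipschitz potential `log J` there are `δ > 0`,
`t ≥ 1` and `α ∈ (0,1)` such that, with the equivalent metric
`d(x,y) = min{1, δ⁻¹ d_θ(x,y)}`, the `t`-th iterate of the dual Ruelle operator is an
`α`-contraction in the `1`-Wasserstein distance:
`W₁((ℒ*)ᵗ(μ₁), (ℒ*)ᵗ(μ₂)) ≤ α W₁(μ₁, μ₂)` for all Borel probability measures. -/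
theorem dualRuelle_wasserstein_contraction
    (d : ℕ) (θ : ℝ) (hθ0 : 0 < θ) (hθ1 : θ < 1)
    (J : (ℕ → Fin d) → ℝ) (hJpos : ∀ x, 0 < J x)
    (M : ℝ) (hJlip : ∀ u v, |Real.log (J u) - Real.log (J v)| ≤ M * dTheta θ u v)
    (hJnorm : ∀ x, ∑ a : Fin d, J (cons a x) = 1) :
    ∃ (δ : ℝ) (t : ℕ) (α : ℝ), 0 < δ ∧ 1 ≤ t ∧ 0 < α ∧ α < 1 ∧
      ∀ μ₁ μ₂ : Measure (ℕ → Fin d),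
        IsProbabilityMeasure μ₁ → IsProbabilityMeasure μ₂ →
          Wcost (fun p => min 1 (δ⁻¹ * dTheta θ p.1 p.2))
              ((dualRuelle J)^[t] μ₁) ((dualRuelle J)^[t] μ₂) ≤
            α * Wcost (fun p => min 1 (δ⁻¹ * dTheta θ p.1 p.2)) μ₁ μ₂ := by
  obtain ⟨M, hM, hJlip⟩ : ∃ M' ≥ 0, ∀ u v, |Real.log (J u) - Real.log (J v)| ≤ M' * dTheta θ u v :=
    ⟨max M 0, le_max_right M 0, fun u v => (hJlip u v).trans
      (mul_le_mul_of_nonneg_right (le_max_left M 0) (dTheta_nonneg hθ0.le u v))⟩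
  have hJ : Measurable J := ((Real.continuous_exp.comp (continuous_of_abs_sub_le_mul_dTheta
    hθ0.le hθ1 hJlip)).congr fun x => Real.exp_log (hJpos x)).measurable
  have hJ0 (x : ℕ → Fin d) : 0 ≤ J x := (hJpos x).le
  obtain ⟨δ, t, α, hδ, ht, hα0, hα1, hcontract⟩ :=
    exists_contraction_constants (K := M * (θ / (1 - θ))) hθ0.le hθ1
      (mul_nonneg hM (div_nonneg hθ0.le (by linarith)))
  refine ⟨δ, t, α, hδ, ht, hα0, hα1, fun μ₁ μ₂ _ _ => ?_⟩
  rw [iterate_dualRuelle_eq_bind hJ hJ0, iterate_dualRuelle_eq_bind hJ hJ0]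
  refine Wcost_bind_le (measurable_const.min (measurable_dTheta.const_mul _))
    (fun p => le_min zero_le_one (mul_nonneg (inv_nonneg.2 hδ.le) (dTheta_nonneg hθ0.le _ _)))
    (fun p => min_le_left _ _) hα0 (measurable_wordKernel hJ t) (measurable_wordCoupling hJ t)
    (map_fst_wordCoupling hJ0 hJnorm t) (map_snd_wordCoupling hJ0 hJnorm t) fun p => ?_
  refine (lintegral_wordCoupling_le hθ0.le hθ1 hM hJpos hJlip hJnorm hδ.le t p).trans
    (ENNReal.ofReal_le_ofReal ?_)
  exact hcontract _ (dTheta_nonneg hθ0.le _ _) (dTheta_le_one hθ0.le hθ1.le _ _)
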